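/- Every infinite profinite group G is homeomorphic, as a topological space, to the product (ℤ/2ℤ)^{w(G)}, where w(G) is the weight of G. -/

import Mathlib

universe u

/-- The weight of a topological space: the minimal cardinality of a basis of the topology. -/
noncomputable def topWeight (X : Type u) [TopologicalSpace X] : Cardinal.{u} :=
  sInf { c : Cardinal.{u} |
    ∃ B : Set (Set X), TopologicalSpace.IsTopologicalBasis B ∧ Cardinal.mk B = c }

/-!
Choose a basis of `G` of cardinality `w(G)`, well-order it, and pick, for each basic neighbourhood
of `1`, an open normal subgroup `N i` inside it. With `M i = ⋂ j < i, N j` and continuous sections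
`r i` of `G → G ⧸ M i` (which exist for every closed subgroup of a profinite group, by Zorn's
lemma), `g ↦ ((r i g)⁻¹ * g mod N i)ᵢ` is a homeomorphism from `G` onto a product of at most
`w(G)` finite discrete spaces, infinitely many of them nontrivial. Grouped in countable blocks, such
a product becomes a power of the Cantor space `ℕ → Bool`: a unary prefix code identifies each
countable product of finite nontrivial discrete spaces with `ℕ → Bool`. So `G ≃ₜ (I → Bool)` with
`#I ≤ w(G)`, and `w(I → Bool) ≤ #I` gives equality.
-/

universe v

open Set Filter Topology TopologicalSpace

lemma Continuous.surjective_pi_of_forall_finset {X ι : Type*} {Y : ι → Type*} [TopologicalSpace X]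
    [CompactSpace X] [∀ i, TopologicalSpace (Y i)] [∀ i, T2Space (Y i)] {φ : X → ∀ i, Y i}
    (hφ : Continuous φ) (h : ∀ (y : ∀ i, Y i) (S : Finset ι), ∃ x, ∀ i ∈ S, φ x i = y i) :
    Function.Surjective φ := by
  intro y
  choose x hx using h y
  have hlim : Tendsto (fun S => φ (x S)) atTop (𝓝 y) :=
    tendsto_pi_nhds.2 fun i => tendsto_nhds_of_eventually_eq <|
      (eventually_ge_atTop {i}).mono fun S hS => hx S i (Finset.singleton_subset_iff.1 hS)
  exact (isCompact_range hφ).isClosed.mem_of_tendsto hlim (.of_forall fun S => mem_range_self _)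

section PrefixCode

variable {α : Type*}

def natCons (a : α) (x : ℕ → α) : ℕ → α
  | 0 => a
  | n + 1 => x n

lemma natCons_inj {a b : α} {x y : ℕ → α} : natCons a x = natCons b y ↔ a = b ∧ x = y :=
  ⟨fun h => ⟨congrFun h 0, funext fun n => congrFun h (n + 1)⟩, fun ⟨ha, hx⟩ => ha ▸ hx ▸ rfl⟩

lemma natCons_head_tail (x : ℕ → α) : natCons (x 0) (fun n => x (n + 1)) = x := by
  funext n; cases n <;> rfl

lemma continuous_natCons [TopologicalSpace α] (a : α) : Continuous (natCons a) :=
  continuous_pi fun n => by cases n <;> simp only [natCons] <;> fun_prop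

lemma Set.EqOn.natCons {x y : ℕ → α} {m : ℕ} (h : EqOn x y (Iio m)) (a : α) :
    EqOn (natCons a x) (natCons a y) (Iio (m + 1)) := by
  rintro (_ | n) hn
  · rfl
  · exact h (Nat.succ_lt_succ_iff.1 hn)

def LengthensAgreement {D : Type*} (e : D × (ℕ → α) → ℕ → α) : Prop :=
  ∀ d x y m, EqOn x y (Iio m) → EqOn (e (d, x)) (e (d, y)) (Iio (m + 1))

end PrefixCode

section InverseLimit

variable {α : Type*} [TopologicalSpace α] {D : ℕ → Type*} [∀ n, TopologicalSpace (D n)]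
  (e : ∀ n, D n × (ℕ → α) ≃ₜ (ℕ → α))

def blockDecodeTail (x : ℕ → α) : ℕ → ℕ → α
  | 0 => x
  | n + 1 => ((e n).symm (blockDecodeTail x n)).2

def blockDecode (x : ℕ → α) (n : ℕ) : D n := ((e n).symm (blockDecodeTail e x n)).1

lemma continuous_blockDecodeTail (n : ℕ) : Continuous fun x => blockDecodeTail e x n := by
  induction n with
  | zero => exact continuous_id
  | succ n ih => exact continuous_snd.comp ((e n).symm.continuous.comp ih)

lemma continuous_blockDecode : Continuous (blockDecode e) :=
  continuous_pi fun n =>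
    continuous_fst.comp ((e n).symm.continuous.comp (continuous_blockDecodeTail e n))

lemma blockDecodeTail_eq (x : ℕ → α) (n : ℕ) :
    blockDecodeTail e x n = e n (blockDecode e x n, blockDecodeTail e x (n + 1)) :=
  ((e n).apply_symm_apply _).symm

lemma blockDecode_injective (he : ∀ n, LengthensAgreement (e n)) :
    Function.Injective (blockDecode e) := by
  intro x y hxy
  have key : ∀ m n, EqOn (blockDecodeTail e x n) (blockDecodeTail e y n) (Iio m) := by
    intro m
    induction m with
    | zero => simp
    | succ m ih =>
      intro n
      rw [blockDecodeTail_eq e x, blockDecodeTail_eq e y, congrFun hxy n]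
      exact he n _ _ _ m (ih (n + 1))
  exact funext fun m => key (m + 1) 0 (Nat.lt_succ_self m)

/-- `blockEncode e f z k n` decodes, from block `n` on, to `f n, …, f (n + k - 1)` followed by
the tail `z`. -/
def blockEncode (f : ∀ n, D n) (z : ℕ → α) : ℕ → ℕ → ℕ → α
  | 0, _ => z
  | k + 1, n => e n (f n, blockEncode f z k (n + 1))

lemma blockDecodeTail_blockEncode (f : ∀ n, D n) (z : ℕ → α) (k : ℕ) :
    ∀ n ≤ k, blockDecodeTail e (blockEncode e f z k 0) n = blockEncode e f z (k - n) n ∧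
      ∀ j < n, blockDecode e (blockEncode e f z k 0) j = f j := by
  intro n
  induction n with
  | zero => simp [blockDecodeTail]
  | succ n ih =>
    intro hn
    obtain ⟨htail, hdec⟩ := ih (by omega)
    obtain ⟨l, hl⟩ : ∃ l, k - n = l + 1 := ⟨k - n - 1, by omega⟩
    have hstep : (e n).symm (blockDecodeTail e (blockEncode e f z k 0) n) =
        (f n, blockEncode e f z l (n + 1)) := by
      rw [htail, hl, blockEncode, Homeomorph.symm_apply_apply]
    refine ⟨?_, fun j hj => ?_⟩
    · rw [blockDecodeTail, hstep, show k - (n + 1) = l by omega]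
    · rcases Nat.lt_succ_iff_lt_or_eq.1 hj with hj | rfl
      · exact hdec j hj
      · rw [blockDecode, hstep]

lemma blockDecode_surjective [CompactSpace α] [∀ n, T2Space (D n)] [Nonempty α] :
    Function.Surjective (blockDecode e) := by
  refine (continuous_blockDecode e).surjective_pi_of_forall_finset fun f S => ?_
  obtain ⟨N, hN⟩ := S.bddAbove
  refine ⟨blockEncode e f (fun _ => Classical.arbitrary α) (N + 1) 0, fun j hj => ?_⟩
  exact (blockDecodeTail_blockEncode e f _ (N + 1) (N + 1) le_rfl).2 j (Nat.lt_succ_of_le (hN hj))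

noncomputable def piHomeomorphOfLengthensAgreement [CompactSpace α] [∀ n, T2Space (D n)]
    [Nonempty α] (he : ∀ n, LengthensAgreement (e n)) : (∀ n, D n) ≃ₜ (ℕ → α) :=
  (Continuous.homeoOfEquivCompactToT2 (f := Equiv.ofBijective (blockDecode e)
    ⟨blockDecode_injective e he, blockDecode_surjective e⟩) (continuous_blockDecode e)).symm

end InverseLimit

section UnaryCode

/-- The unary prefix code: `i : Fin (k + 1)` is written as `i` ones followed by a zero,
except for `i = k`, which is written as `k` ones. -/
def unaryCode : (k : ℕ) → Fin (k + 1) → (ℕ → Bool) → ℕ → Bool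
  | 0, _, x => x
  | k + 1, i, x => Fin.cases (natCons false x) (fun j => natCons true (unaryCode k j x)) i

lemma continuous_unaryCode (k : ℕ) (i : Fin (k + 1)) : Continuous (unaryCode k i) := by
  induction k with
  | zero => exact continuous_id
  | succ k ih =>
    cases i using Fin.cases with
    | zero => exact continuous_natCons false
    | succ j => exact (continuous_natCons true).comp (ih j)

lemma unaryCode_injective (k : ℕ) {i j : Fin (k + 1)} {x y : ℕ → Bool}
    (h : unaryCode k i x = unaryCode k j y) : i = j ∧ x = y := by
  induction k with
  | zero => exact ⟨Subsingleton.elim (α := Fin 1) _ _, h⟩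
  | succ k ih =>
    cases i using Fin.cases <;> cases j using Fin.cases <;>
      simp only [unaryCode, Fin.cases_zero, Fin.cases_succ, natCons_inj] at h
    · exact ⟨rfl, h.2⟩
    · exact absurd h.1 Bool.false_ne_true
    · exact absurd h.1.symm Bool.false_ne_true
    · obtain ⟨rfl, rfl⟩ := ih h.2
      exact ⟨rfl, rfl⟩

lemma unaryCode_surjective (k : ℕ) (z : ℕ → Bool) : ∃ i x, unaryCode k i x = z := by
  induction k generalizing z with
  | zero => exact ⟨0, z, rfl⟩
  | succ k ih =>
    rw [← natCons_head_tail z]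
    cases z 0
    · exact ⟨0, _, rfl⟩
    · obtain ⟨j, x, hx⟩ := ih fun n => z (n + 1)
      exact ⟨j.succ, x, by simp only [unaryCode, Fin.cases_succ, hx]⟩

lemma Set.EqOn.unaryCode {x y : ℕ → Bool} {m : ℕ} (h : EqOn x y (Iio m)) (k : ℕ) (i : Fin (k + 1)) :
    EqOn (unaryCode k i x) (unaryCode k i y) (Iio m) := by
  induction k with
  | zero => exact h
  | succ k ih =>
    cases i using Fin.cases with
    | zero => exact (h.natCons false).mono (Iio_subset_Iio m.le_succ)
    | succ j => exact ((ih j).natCons true).mono (Iio_subset_Iio m.le_succ)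

noncomputable def unaryCodeHomeomorph (k : ℕ) : Fin (k + 1) × (ℕ → Bool) ≃ₜ (ℕ → Bool) :=
  Continuous.homeoOfEquivCompactToT2
    (f := Equiv.ofBijective (fun p => unaryCode k p.1 p.2)
      ⟨fun p q h => Prod.ext_iff.2 (unaryCode_injective k h), fun z => by
        obtain ⟨i, x, hx⟩ := unaryCode_surjective k z
        exact ⟨(i, x), hx⟩⟩)
    (continuous_prod_of_discrete_left.2 (continuous_unaryCode k))

lemma lengthensAgreement_unaryCodeHomeomorph (k : ℕ) :
    LengthensAgreement (unaryCodeHomeomorph (k + 1)) := by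
  rintro i x y m h
  cases i using Fin.cases with
  | zero => exact h.natCons false
  | succ j => exact (h.unaryCode k j).natCons true

lemma exists_prod_homeomorph_lengthensAgreement (D : Type*) [TopologicalSpace D]
    [DiscreteTopology D] [Finite D] [Nontrivial D] :
    ∃ e : D × (ℕ → Bool) ≃ₜ (ℕ → Bool), LengthensAgreement e := by
  obtain ⟨k, hk⟩ : ∃ k, Nat.card D = k + 2 :=
    ⟨Nat.card D - 2, by have := Finite.one_lt_card_iff_nontrivial.2 ‹Nontrivial D›; omega⟩
  let σ : D ≃ₜ Fin (k + 2) := (Finite.equivFinOfCardEq hk).toHomeomorphOfDiscrete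
  refine ⟨(σ.prodCongr (Homeomorph.refl _)).trans (unaryCodeHomeomorph (k + 1)), ?_⟩
  intro d x y m h
  exact lengthensAgreement_unaryCodeHomeomorph k (σ d) x y m h

theorem nonempty_pi_nat_homeomorph_cantor (D : ℕ → Type*) [∀ n, TopologicalSpace (D n)]
    [∀ n, DiscreteTopology (D n)] [∀ n, Finite (D n)] [∀ n, Nontrivial (D n)] :
    Nonempty ((∀ n, D n) ≃ₜ (ℕ → Bool)) := by
  choose e he using fun n => exists_prod_homeomorph_lengthensAgreement (D n)
  exact ⟨piHomeomorphOfLengthensAgreement e he⟩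

end UnaryCode

section InfiniteProduct

def Homeomorph.piProdCurry {α β : Type*} (Y : α × β → Type*) [∀ p, TopologicalSpace (Y p)] :
    (∀ p, Y p) ≃ₜ ∀ a b, Y (a, b) where
  toFun f a b := f (a, b)
  invFun g p := g p.1 p.2
  continuous_toFun := by fun_prop
  continuous_invFun := by fun_prop

theorem nonempty_pi_homeomorph_pi_bool (I : Type*) [Infinite I] (D : I → Type*)
    [∀ i, TopologicalSpace (D i)] [∀ i, DiscreteTopology (D i)] [∀ i, Finite (D i)]
    [∀ i, Nontrivial (D i)] : Nonempty ((∀ i, D i) ≃ₜ (I → Bool)) := by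
  obtain ⟨e⟩ : Nonempty (I × ℕ ≃ I) := Cardinal.eq.1 <| by
    simp [Cardinal.mul_aleph0_eq (Cardinal.aleph0_le_mk I)]
  have cantor a := (nonempty_pi_nat_homeomorph_cantor fun n => D (e (a, n))).some
  exact ⟨(Homeomorph.piCongrLeft e).symm.trans <| (Homeomorph.piProdCurry _).trans <|
    (Homeomorph.piCongrRight cantor).trans <| (Homeomorph.piProdCurry fun _ => Bool).symm.trans <|
    Homeomorph.piCongrLeft (Y := fun _ => Bool) e⟩

noncomputable def Homeomorph.piSubtypeNontrivial {ι : Type*} (Y : ι → Type*)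
    [∀ i, TopologicalSpace (Y i)] [∀ i, Nonempty (Y i)] :
    (∀ i, Y i) ≃ₜ ∀ i : {i // Nontrivial (Y i)}, Y i :=
  letI := Classical.decPred fun i => Nontrivial (Y i)
  letI (i : {i // ¬Nontrivial (Y i)}) : Unique (Y i) :=
    @uniqueOfSubsingleton _ (not_nontrivial_iff_subsingleton.1 i.2) (Classical.arbitrary _)
  (Homeomorph.piEquivPiSubtypeProd _ Y).trans (Homeomorph.prodUnique _ _)

end InfiniteProduct

section Weight

open Cardinal

variable {X Y : Type u} [TopologicalSpace X] [TopologicalSpace Y]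

lemma topWeight_le_mk {B : Set (Set X)} (hB : IsTopologicalBasis B) : topWeight X ≤ #B :=
  csInf_le' ⟨B, hB, rfl⟩

lemma exists_isTopologicalBasis_mk_eq_topWeight (X : Type u) [TopologicalSpace X] :
    ∃ B : Set (Set X), IsTopologicalBasis B ∧ #B = topWeight X :=
  csInf_mem (s := {c | ∃ B : Set (Set X), IsTopologicalBasis B ∧ #B = c})
    ⟨_, _, isTopologicalBasis_opens, rfl⟩

lemma topWeight_le_of_homeomorph (h : X ≃ₜ Y) : topWeight X ≤ topWeight Y := by
  obtain ⟨B, hB, hBY⟩ := exists_isTopologicalBasis_mk_eq_topWeight Y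
  calc topWeight X ≤ #(preimage h '' B) := topWeight_le_mk (hB.isInducing h.isInducing)
    _ ≤ #B := mk_image_le
    _ = topWeight Y := hBY

lemma topWeight_pi_le {I : Type u} [Infinite I] (A : I → Type v) [∀ i, TopologicalSpace (A i)]
    [∀ i, DiscreteTopology (A i)] [∀ i, Finite (A i)] :
    topWeight (∀ i, A i) ≤ Cardinal.lift.{v} #I := by
  classical
  let box : (Σ F : Finset I, ∀ i : F, Set (A i)) → Set (∀ i, A i) := fun p =>
    (p.1 : Set I).pi fun i => if h : i ∈ p.1 then p.2 ⟨i, h⟩ else univ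
  have hbasis : IsTopologicalBasis (range box) := by
    refine (isTopologicalBasis_pi fun i => isTopologicalBasis_opens (α := A i)).of_isOpen_of_subset
      ?_ ?_
    · rintro _ ⟨p, rfl⟩
      exact isOpen_set_pi p.1.finite_toSet fun i _ => isOpen_discrete _
    · rintro _ ⟨U, F, -, rfl⟩
      refine ⟨⟨F, fun i => U i⟩, Set.pi_congr rfl fun i hi => ?_⟩
      simp only [Finset.mem_coe] at hi
      simp [hi]
  calc topWeight (∀ i, A i) ≤ #(range box) := topWeight_le_mk hbasis
    _ ≤ #(Σ F : Finset I, ∀ i : F, Set (A i)) := mk_range_le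
    _ ≤ lift.{v} #(Finset I) * ℵ₀ := by
      rw [mk_sigma]
      refine (sum_le_sum _ (fun _ => ℵ₀) fun F => (lt_aleph0_of_finite _).le).trans ?_
      rw [sum_const, lift_aleph0, lift_umax.{u, v}]
    _ = lift.{v} #I := by rw [mk_finset_of_infinite, mul_aleph0_eq (by simp)]

end Weight

section ContinuousSection

section Group

variable {G : Type*} [Group G]

lemma Subgroup.inv_mul_mem_trans {S : Subgroup G} {x y z : G} (h₁ : x⁻¹ * y ∈ S)
    (h₂ : y⁻¹ * z ∈ S) : x⁻¹ * z ∈ S := by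
  simpa [mul_assoc] using S.mul_mem h₁ h₂

lemma Subgroup.inv_mul_mem_symm {S : Subgroup G} {x y : G} (h : x⁻¹ * y ∈ S) : y⁻¹ * x ∈ S := by
  simpa using S.inv_mem h

lemma QuotientGroup.inv_mul_out_mem (S : Subgroup G) (g : G) : g⁻¹ * (g : G ⧸ S).out ∈ S :=
  QuotientGroup.eq.1 (QuotientGroup.out_eq' _).symm

lemma Subgroup.exists_inv_mul_mem_of_mem_sup {K W : Subgroup G} [W.Normal] {x z : G}
    (h : x⁻¹ * z ∈ K ⊔ W) : ∃ y, x⁻¹ * y ∈ K ∧ z⁻¹ * y ∈ W := by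
  obtain ⟨k, hk, w, hw, hkw⟩ := Subgroup.mem_sup_of_normal_right.1 h
  refine ⟨x * k, by simpa using hk, ?_⟩
  have hz : z = x * k * w := by rw [mul_assoc, hkw, mul_inv_cancel_left]
  simpa [hz, mul_assoc] using W.inv_mem hw

lemma Subgroup.sup_inf_le {K V W O : Subgroup G} [V.Normal] (hVW : V ≤ W) (hVO : V ≤ O)
    (hKW : K ⊓ W ≤ O) : (K ⊔ V) ⊓ W ≤ O := by
  rintro z ⟨hz, hzW⟩
  obtain ⟨k, hk, v, hv, rfl⟩ := Subgroup.mem_sup_of_normal_right.1 hz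
  have hkW : k ∈ W := by simpa using W.mul_mem hzW (W.inv_mem (hVW hv))
  exact O.mul_mem (hKW ⟨hk, hkW⟩) (hVO hv)

end Group

variable {G : Type*} [Group G] [TopologicalSpace G]

variable (M : Subgroup G) in
/-- A selection `toFun g ∈ g M`, constant on the cosets of `M`, whose composite with
`G → G ⧸ K` is continuous, tested against the open subgroups containing `K`. -/
structure PartialSection where
  K : Subgroup G
  isClosed : IsClosed (K : Set G)
  le : K ≤ M
  toFun : G → G
  mem : ∀ g, g⁻¹ * toFun g ∈ M
  eq_of_mem : ∀ g h, g⁻¹ * h ∈ M → toFun g = toFun h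
  eventually_mem : ∀ O : Subgroup G, IsOpen (O : Set G) → K ≤ O →
    ∀ x, ∀ᶠ y in 𝓝 x, (toFun x)⁻¹ * toFun y ∈ O

namespace PartialSection

variable {M : Subgroup G}

instance : Preorder (PartialSection M) where
  le P Q := Q.K ≤ P.K ∧ ∀ g, (P.toFun g)⁻¹ * Q.toFun g ∈ P.K
  le_refl P := ⟨le_rfl, fun g => by simp⟩
  le_trans P Q R hPQ hQR :=
    ⟨hQR.1.trans hPQ.1, fun g => Subgroup.inv_mul_mem_trans (hPQ.2 g) (hPQ.1 (hQR.2 g))⟩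

def coset (P : PartialSection M) (g : G) : Set G := {y | (P.toFun g)⁻¹ * y ∈ P.K}

@[simp] lemma mem_coset {P : PartialSection M} {g y : G} :
    y ∈ P.coset g ↔ (P.toFun g)⁻¹ * y ∈ P.K := Iff.rfl

lemma coset_anti {P Q : PartialSection M} (hPQ : P ≤ Q) (g : G) : Q.coset g ⊆ P.coset g :=
  fun _ hy => Subgroup.inv_mul_mem_trans (hPQ.2 g) (hPQ.1 hy)

section

variable [CompactSpace G] {ι : Type*} [Nonempty ι] {P : ι → PartialSection M}

lemma exists_K_le_of_iInf_le (hP : Directed (· ≤ ·) P) {O : Subgroup G}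
    (hO : IsOpen (O : Set G)) (hKO : ⨅ i, (P i).K ≤ O) : ∃ i, (P i).K ≤ O :=
  exists_subset_nhds_of_isCompact' (V := fun i => ((P i).K : Set G))
    (hP.mono_comp (g := fun Q => (Q.K : Set G)) _ fun _ _ hQ => hQ.1)
    (fun i => (P i).isClosed.isCompact) (fun i => (P i).isClosed) fun _ hx =>
      hO.mem_nhds (hKO (by simpa [Subgroup.coe_iInf] using hx))

end

variable [IsTopologicalGroup G]

lemma isClosed_coset (P : PartialSection M) (g : G) : IsClosed (P.coset g) :=
  P.isClosed.preimage (continuous_const_mul _)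

variable (M) in
noncomputable def quotientOut (hM : IsClosed (M : Set G)) : PartialSection M where
  K := M
  isClosed := hM
  le := le_rfl
  toFun g := (g : G ⧸ M).out
  mem := QuotientGroup.inv_mul_out_mem M
  eq_of_mem g h hgh := congrArg Quotient.out (QuotientGroup.eq.2 hgh : (g : G ⧸ M) = h)
  eventually_mem O hO hMO x := by
    have hx : ∀ᶠ y in 𝓝 x, x⁻¹ * y ∈ O :=
      (continuous_const_mul x⁻¹).continuousAt.preimage_mem_nhds (hO.mem_nhds (by simp))
    filter_upwards [hx] with y hy
    exact Subgroup.inv_mul_mem_trans (Subgroup.inv_mul_mem_trans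
      (Subgroup.inv_mul_mem_symm (hMO (QuotientGroup.inv_mul_out_mem M x))) hy)
      (hMO (QuotientGroup.inv_mul_out_mem M y))

section

variable [CompactSpace G] {ι : Type*} [Nonempty ι] {P : ι → PartialSection M}

lemma nonempty_iInter_coset (hP : Directed (· ≤ ·) P) (g : G) :
    (⋂ i, (P i).coset g).Nonempty :=
  IsCompact.nonempty_iInter_of_directed_nonempty_isCompact_isClosed _
    (hP.mono_comp (g := fun Q => Q.coset g) _ fun _ _ hQ => coset_anti hQ g)
    (fun i => ⟨(P i).toFun g, by simp⟩) (fun i => ((P i).isClosed_coset g).isCompact)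
    (fun i => (P i).isClosed_coset g)

noncomputable def directedChoice (hP : Directed (· ≤ ·) P) (g : G) : G :=
  (nonempty_iInter_coset hP (g : G ⧸ M).out).some

lemma inv_mul_directedChoice_mem (hP : Directed (· ≤ ·) P) (i : ι) (g : G) :
    ((P i).toFun g)⁻¹ * directedChoice hP g ∈ (P i).K := by
  have h := mem_iInter.1 (nonempty_iInter_coset hP (g : G ⧸ M).out).some_mem i
  rwa [mem_coset, (P i).eq_of_mem _ g
    (Subgroup.inv_mul_mem_symm (QuotientGroup.inv_mul_out_mem M g))] at h

noncomputable def ofDirected (P : ι → PartialSection M) (hP : Directed (· ≤ ·) P) :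
    PartialSection M where
  K := ⨅ i, (P i).K
  isClosed := by
    simpa only [Subgroup.coe_iInf] using isClosed_iInter fun i => (P i).isClosed
  le := (iInf_le _ (Classical.arbitrary ι)).trans (P _).le
  toFun := directedChoice hP
  mem g := Subgroup.inv_mul_mem_trans ((P _).mem g)
    ((P _).le (inv_mul_directedChoice_mem hP (Classical.arbitrary ι) g))
  eq_of_mem g h hgh := by simp only [directedChoice, QuotientGroup.eq.2 hgh]
  eventually_mem O hO hKO x := by
    obtain ⟨i, hi⟩ := exists_K_le_of_iInf_le hP hO hKO
    filter_upwards [(P i).eventually_mem O hO hi x] with y hy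
    exact Subgroup.inv_mul_mem_trans (Subgroup.inv_mul_mem_trans
      (Subgroup.inv_mul_mem_symm (hi (inv_mul_directedChoice_mem hP i x))) hy)
      (hi (inv_mul_directedChoice_mem hP i y))

lemma le_ofDirected (hP : Directed (· ≤ ·) P) (i : ι) : P i ≤ ofDirected P hP :=
  ⟨iInf_le _ i, inv_mul_directedChoice_mem hP i⟩

lemma bddAbove_of_isChain {c : Set (PartialSection M)} (hc : IsChain (· ≤ ·) c)
    (hne : c.Nonempty) : BddAbove c := by
  have : Nonempty c := hne.to_subtype
  have hdir := directedOn_iff_directed.1 hc.directedOn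
  exact ⟨ofDirected _ hdir, fun P hP => le_ofDirected hdir ⟨P, hP⟩⟩

end

variable [CompactSpace G] [TotallyDisconnectedSpace G]

lemma exists_le_K_eq_inf (P : PartialSection M) (W : Subgroup G) [W.Normal]
    (hW : IsOpen (W : Set G)) : ∃ Q : PartialSection M, P ≤ Q ∧ Q.K = P.K ⊓ W := by
  have hKW_open : IsOpen ((P.K ⊔ W : Subgroup G) : Set G) := Subgroup.isOpen_mono le_sup_right hW
  -- Move `P.toFun g` inside its `P.K`-coset onto the `W`-coset of a fixed representative `rep`
  -- of its `P.K ⊔ W`-coset.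
  let rep (x : G) : G := (x : G ⧸ (P.K ⊔ W)).out
  have hsel (x : G) : ∃ y, x⁻¹ * y ∈ P.K ∧ (rep x)⁻¹ * y ∈ W :=
    Subgroup.exists_inv_mul_mem_of_mem_sup (QuotientGroup.inv_mul_out_mem _ x)
  choose sel hselK hselW using hsel
  refine ⟨{ K := P.K ⊓ W
            isClosed := P.isClosed.inter (Subgroup.isClosed_of_isOpen W hW)
            le := inf_le_left.trans P.le
            toFun := fun g => sel (P.toFun g)
            mem := fun g => Subgroup.inv_mul_mem_trans (P.mem g) (P.le (hselK _))
            eq_of_mem := fun g h hgh => by simp only [P.eq_of_mem g h hgh]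
            eventually_mem := fun O hO hKO x => ?_ }, ⟨inf_le_left, fun g => hselK _⟩, rfl⟩
  obtain ⟨V, hV⟩ := ProfiniteGrp.exist_openNormalSubgroup_sub_open_nhds_of_one
    (hW.inter hO) ⟨W.one_mem, O.one_mem⟩
  have hVW : (V : Subgroup G) ≤ W := fun v hv => (hV hv).1
  have hVO : (V : Subgroup G) ≤ O := fun v hv => (hV hv).2
  filter_upwards [P.eventually_mem _ (Subgroup.isOpen_mono le_sup_right V.isOpen) le_sup_left x,
    P.eventually_mem _ hKW_open le_sup_left x] with y hyV hyW
  have hrep : rep (P.toFun x) = rep (P.toFun y) := by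
    simp only [rep, QuotientGroup.eq.2 hyW]
  -- The quotient of the new values lies in `P.K ⊔ V`, like that of the old ones, and in `W`,
  -- since both new values lie in the `W`-coset of the same representative.
  refine Subgroup.sup_inf_le hVW hVO hKO ⟨?_, ?_⟩
  · exact Subgroup.inv_mul_mem_trans (Subgroup.inv_mul_mem_trans
      (Subgroup.inv_mul_mem_symm (Subgroup.mem_sup_left (hselK _))) hyV)
      (Subgroup.mem_sup_left (hselK _))
  · exact Subgroup.inv_mul_mem_trans (Subgroup.inv_mul_mem_symm (hselW _)) (hrep ▸ hselW _)

lemma K_eq_bot_of_isMax {P : PartialSection M} (hP : IsMax P) : P.K = ⊥ := by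
  refine (Subgroup.eq_bot_iff_forall _).2 fun x hx => ?_
  by_contra hx1
  obtain ⟨W, hW⟩ := ProfiniteGrp.exist_openNormalSubgroup_sub_open_nhds_of_one
    isOpen_compl_singleton (Ne.symm hx1)
  obtain ⟨Q, hPQ, hQ⟩ := P.exists_le_K_eq_inf W W.isOpen
  have hxQ : x ∈ Q.K := (hP hPQ).1 hx
  exact (hW (hQ ▸ hxQ).2) rfl

end PartialSection

variable [IsTopologicalGroup G] [CompactSpace G] [TotallyDisconnectedSpace G]

lemma continuous_of_eventually_inv_mul_mem {X : Type*} [TopologicalSpace X] {f : X → G}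
    (h : ∀ O : Subgroup G, IsOpen (O : Set G) → ∀ x, ∀ᶠ y in 𝓝 x, (f x)⁻¹ * f y ∈ O) :
    Continuous f := by
  refine continuous_iff_continuousAt.2 fun x U hU => Filter.mem_map.2 ?_
  obtain ⟨V, hVU, hV, h1V⟩ := mem_nhds_iff.1 <|
    (continuous_const_mul (f x)).continuousAt (x := 1) (by simpa using hU)
  obtain ⟨H, hH⟩ := ProfiniteGrp.exist_openNormalSubgroup_sub_open_nhds_of_one hV h1V
  filter_upwards [h H H.isOpen x] with y hy
  simpa using hVU (hH hy)

theorem exists_continuous_section {M : Subgroup G} (hM : IsClosed (M : Set G)) :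
    ∃ r : G → G, Continuous r ∧ (∀ g, g⁻¹ * r g ∈ M) ∧ ∀ g h, g⁻¹ * h ∈ M → r g = r h := by
  have : Nonempty (PartialSection M) := ⟨PartialSection.quotientOut M hM⟩
  obtain ⟨P, hP⟩ := zorn_le_nonempty (α := PartialSection M) fun _ hc hne =>
    PartialSection.bddAbove_of_isChain hc hne
  refine ⟨P.toFun, continuous_of_eventually_inv_mul_mem fun O hO => ?_, P.mem, P.eq_of_mem⟩
  exact P.eventually_mem O hO (PartialSection.K_eq_bot_of_isMax hP ▸ bot_le)

end ContinuousSection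

section Filtration

variable {G : Type*} [Group G] {ι : Type*} [LinearOrder ι] (N : ι → Subgroup G) (r : ι → G → G)

def filtrationCoord (g : G) (i : ι) : G ⧸ N i := ((r i g)⁻¹ * g : G)

def filtrationFactor (i : ι) : Set (G ⧸ N i) := (↑) '' ((⨅ j < i, N j : Subgroup G) : Set G)

variable {N r}

lemma filtrationCoord_injective [WellFoundedLT ι] (hN : ∀ g, (∀ i, g ∈ N i) → g = 1)
    (hr : ∀ i g h, g⁻¹ * h ∈ ⨅ j < i, N j → r i g = r i h) :
    Function.Injective (filtrationCoord N r) := by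
  intro g h hgh
  have key (i : ι) : g⁻¹ * h ∈ N i := by
    induction i using WellFoundedLT.induction with
    | ind i ih =>
      have hri := hr i g h (by simpa [Subgroup.mem_iInf] using ih)
      have := QuotientGroup.eq.1 (congrFun hgh i)
      simpa [hri, mul_assoc] using this
  simpa [inv_mul_eq_one] using hN _ key

lemma exists_filtrationCoord_eq (hr_mem : ∀ i g, g⁻¹ * r i g ∈ ⨅ j < i, N j)
    (hr : ∀ i g h, g⁻¹ * h ∈ ⨅ j < i, N j → r i g = r i h) (t : ∀ i, G ⧸ N i)
    (ht : ∀ i, ∃ u ∈ ⨅ j < i, N j, (u : G ⧸ N i) = t i) (S : Finset ι) :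
    ∃ g, ∀ i ∈ S, filtrationCoord N r g i = t i := by
  classical
  induction S using Finset.induction_on_max with
  | empty => exact ⟨1, by simp⟩
  | insert a S hlt ih =>
    obtain ⟨g, hg⟩ := ih
    obtain ⟨u, hu, hut⟩ := ht a
    have hg' : g⁻¹ * (r a g * u) ∈ ⨅ j < a, N j := by
      simpa [mul_assoc] using Subgroup.mul_mem _ (hr_mem a g) hu
    refine ⟨r a g * u, fun i hi => ?_⟩
    rcases Finset.mem_insert.1 hi with rfl | hiS
    · simp [filtrationCoord, ← hr i g _ hg', hut]
    · have hlt' := hlt i hiS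
      simp only [Subgroup.mem_iInf] at hg'
      have hgi : g⁻¹ * (r a g * u) ∈ ⨅ j < i, N j := by
        simpa only [Subgroup.mem_iInf] using fun j hj => hg' j (hj.trans hlt')
      rw [← hg i hiS, filtrationCoord, filtrationCoord, ← hr i g _ hgi]
      exact (QuotientGroup.eq.2 (by simpa [mul_assoc] using hg' i hlt')).symm

end Filtration

section Profinite

variable {G : Type*} [Group G] [TopologicalSpace G] [IsTopologicalGroup G] [CompactSpace G]
  [TotallyDisconnectedSpace G]

theorem nonempty_homeomorph_pi_filtration {ι : Type*} [LinearOrder ι] [WellFoundedLT ι]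
    (N : ι → Subgroup G) (hN_open : ∀ i, IsOpen (N i : Set G)) (hN : ∀ g, (∀ i, g ∈ N i) → g = 1) :
    Nonempty (G ≃ₜ ∀ i, filtrationFactor N i) := by
  have : ∀ i, DiscreteTopology (G ⧸ N i) := fun i => QuotientGroup.discreteTopology (hN_open i)
  have hM_closed (i : ι) : IsClosed ((⨅ j < i, N j : Subgroup G) : Set G) := by
    simpa only [Subgroup.coe_iInf] using
      isClosed_iInter fun j => isClosed_iInter fun _ => Subgroup.isClosed_of_isOpen _ (hN_open j)
  choose r hr_cont hr_mem hr using fun i => exists_continuous_section (hM_closed i)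
  let ψ (g : G) (i : ι) : filtrationFactor N i :=
    ⟨filtrationCoord N r g i, _, Subgroup.inv_mul_mem_symm (hr_mem i g), rfl⟩
  have hψ : Continuous ψ := continuous_pi fun i =>
    (continuous_quot_mk.comp ((hr_cont i).inv.mul continuous_id)).subtype_mk _
  have hψ_inj : Function.Injective ψ := fun g h hgh =>
    filtrationCoord_injective hN hr (funext fun i => congrArg Subtype.val (congrFun hgh i))
  have hψ_surj : Function.Surjective ψ := hψ.surjective_pi_of_forall_finset fun t S => by
    obtain ⟨g, hg⟩ := exists_filtrationCoord_eq hr_mem hr (fun i => t i)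
      (fun i => (t i).2) S
    exact ⟨g, fun i hi => Subtype.ext (hg i hi)⟩
  exact ⟨hψ.homeoOfEquivCompactToT2 (f := Equiv.ofBijective ψ ⟨hψ_inj, hψ_surj⟩)⟩

lemma exists_isOpen_subgroups_iInf_eq_bot {B : Set (Set G)} (hB : IsTopologicalBasis B) :
    ∃ N : {b : B // (1 : G) ∈ (b : Set G)} → Subgroup G,
      (∀ b, IsOpen (N b : Set G)) ∧ ∀ g, (∀ b, g ∈ N b) → g = 1 := by
  have hN (b : {b : B // (1 : G) ∈ (b : Set G)}) :
      ∃ H : Subgroup G, IsOpen (H : Set G) ∧ (H : Set G) ⊆ b := by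
    obtain ⟨H, hH⟩ := ProfiniteGrp.exist_openNormalSubgroup_sub_open_nhds_of_one
      (hB.isOpen b.1.2) b.2
    exact ⟨H, H.isOpen, hH⟩
  choose N hN_open hN_sub using hN
  refine ⟨N, hN_open, fun g hg => ?_⟩
  by_contra h
  obtain ⟨b, hbB, h1b, hb⟩ :=
    hB.exists_subset_of_mem_open (Ne.symm h : (1 : G) ∈ ({g}ᶜ : Set G)) isOpen_compl_singleton
  exact hb (hN_sub ⟨⟨b, hbB⟩, h1b⟩ (hg _)) rfl

end Profinite

open Cardinal in
theorem exists_homeomorph_pi_bool_mk_le_topWeight (G : Type u) [Group G] [TopologicalSpace G]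
    [IsTopologicalGroup G] [CompactSpace G] [TotallyDisconnectedSpace G] [Infinite G] :
    ∃ I : Type u, Infinite I ∧ #I ≤ topWeight G ∧ Nonempty (G ≃ₜ (I → Bool)) := by
  obtain ⟨B, hB, hBw⟩ := exists_isTopologicalBasis_mk_eq_topWeight G
  obtain ⟨N, hN_open, hN⟩ := exists_isOpen_subgroups_iInf_eq_bot hB
  let ι := {b : B // (1 : G) ∈ (b : Set G)}
  obtain ⟨_, _⟩ := exists_wellFoundedLT ι
  obtain ⟨φ⟩ := nonempty_homeomorph_pi_filtration N hN_open hN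
  have (b : ι) : DiscreteTopology (G ⧸ N b) := QuotientGroup.discreteTopology (hN_open b)
  have (b : ι) : Finite (G ⧸ N b) := Subgroup.quotient_finite_of_isOpen _ (hN_open b)
  have (b : ι) : Nonempty (filtrationFactor N b) := ⟨⟨_, 1, Subgroup.one_mem _, rfl⟩⟩
  let J := {b // Nontrivial (filtrationFactor N b)}
  have (j : J) : Nontrivial (filtrationFactor N j) := j.2
  let ψ := φ.trans (Homeomorph.piSubtypeNontrivial fun b => filtrationFactor N b)
  have : Infinite J := by
    by_contra hJ
    have : Finite J := not_infinite_iff_finite.1 hJ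
    exact not_finite_iff_infinite.2 ‹Infinite G› (Finite.of_equiv _ ψ.symm.toEquiv)
  obtain ⟨χ⟩ := nonempty_pi_homeomorph_pi_bool J fun j => filtrationFactor N j
  refine ⟨J, this, ?_, ⟨ψ.trans χ⟩⟩
  calc #J ≤ #ι := mk_subtype_le _
    _ ≤ #B := mk_subtype_le _
    _ = topWeight G := hBw

theorem profinite_homeomorph_cantor_cube_general (G : Type u) [Group G] [TopologicalSpace G]
    [IsTopologicalGroup G] [CompactSpace G] [TotallyDisconnectedSpace G]
    [Infinite G] :
    Nonempty (G ≃ₜ ((topWeight G).out → Bool)) := by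
  obtain ⟨I, _, hI, ⟨φ⟩⟩ := exists_homeomorph_pi_bool_mk_le_topWeight G
  have hw : topWeight G ≤ Cardinal.mk I := by
    simpa using (topWeight_le_of_homeomorph φ).trans (topWeight_pi_le fun _ : I => Bool)
  obtain ⟨e⟩ := Cardinal.eq.1 ((Cardinal.mk_out _).trans (hw.antisymm hI)).symm
  exact ⟨φ.trans (Homeomorph.piCongrLeft (Y := fun _ => Bool) e)⟩

/-- Every infinite profinite group $G$ is homeomorphic, as a topological space, to
$(\mathbb Z/2\mathbb Z)^{w(G)}$, a product of $w(G)$ copies of the two point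
discrete space. -/
theorem profinite_homeomorph_cantor_cube (G : Type u) [Group G] [TopologicalSpace G]
    [IsTopologicalGroup G] [CompactSpace G] [T2Space G] [TotallyDisconnectedSpace G]
    [Infinite G] :
    Nonempty (G ≃ₜ ((topWeight G).out → Bool)) :=
  profinite_homeomorph_cantor_cube_general G
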